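/- arXiv:1703.10101 — 5 statements merged into one kernel-verified Lean document; each statement's English description precedes it below -/
import Mathlib

section
/- Let π : Y → X be a surjective homomorphism of finite groups and k ≥ 1. Then p_k(Y) ≥ (1 - Σ_{[M]} 1/[Y:M]^{k-1}) · p_k(X), where p_k(G) denotes the probability that a uniformly random k-tuple of elements of G generates G, and the sum runs over Y-conjugacy classes [M] of proper maximal subgroups M of Y with π(M) = X. -/
open Pointwise

/-- The probability that a uniformly random `k`-tuple of elements of `G` generates `G`. -/
noncomputable def pgen (k : ℕ) (G : Type*) [Group G] : ℝ :=
  (Nat.card {v : Fin k → G // Subgroup.closure (Set.range v) = ⊤} : ℝ) /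
    (Nat.card G : ℝ) ^ k

/-- `R` is a set of representatives of the `Y`-conjugacy classes of proper maximal
subgroups of `Y` surjecting onto `X` (the set `G(Y|X)` of the paper). -/
def IsConjClassReps {Y X : Type*} [Group Y] [Group X] (π : Y →* X)
    (R : Finset (Subgroup Y)) : Prop :=
  (∀ M ∈ R, IsCoatom M ∧ M.map π = ⊤) ∧
    ∀ N : Subgroup Y, IsCoatom N → N.map π = ⊤ →
      ∃! M, M ∈ R ∧ ∃ y : Y, Subgroup.map (MulAut.conj y).toMonoidHom N = M

/-!
A `k`-tuple of `Y` whose image generates `X` either generates `Y` or lies in a maximal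
subgroup `N` of `Y` with `π(N) = X`. Among the tuples of `N^k`, a proportion `p_k(X)` maps
to a generating tuple of `X`, and `N` is one of at most `[Y:M]` conjugates of a
representative `M`, all of order `|M|`. The union bound then gives
`p_k(X) ≤ p_k(Y) + Σ_M [Y:M] ⬝ p_k(X) ⬝ |M|^k / |Y|^k`,
and `[Y:M] ⬝ |M|^k / |Y|^k = [Y:M]^{1-k}`.
-/

open MulAction Subgroup

lemma MonoidHom.ncard_preimage_mul_card {A B : Type*} [Group A] [Group B] [Finite A]
    (f : A →* B) (hf : Function.Surjective f) (s : Set B) :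
    (f ⁻¹' s).ncard * Nat.card B = s.ncard * Nat.card A := by
  set e := QuotientGroup.quotientKerEquivOfSurjective f hf
  have hfiber : (f ⁻¹' s).ncard = Nat.card f.ker * s.ncard := by
    change (QuotientGroup.mk ⁻¹' (e ⁻¹' s) : Set A).ncard = _
    rw [← Nat.card_coe_set_eq, Nat.card_congr (QuotientGroup.preimageMkEquivSubgroupProdSet _ _),
      Nat.card_prod, Nat.card_coe_set_eq,
      Set.ncard_preimage_of_injective_subset_range e.injective (by simp [e.surjective.range_eq])]
  rw [hfiber, f.ker.card_eq_card_quotient_mul_card_subgroup, Nat.card_congr e.toEquiv]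
  ring

lemma ncard_orbit_conjAct_le_index {G : Type*} [Group G] [Finite G] (H : Subgroup G) :
    (orbit (ConjAct G) H).ncard ≤ H.index := by
  have : Finite (ConjAct G) := inferInstanceAs (Finite G)
  rw [← index_stabilizer, ← H.index_map_equiv ConjAct.toConjAct]
  refine index_antitone ?_
  rintro _ ⟨h, hh, rfl⟩
  exact conjAct_pointwise_smul_eq_self (le_normalizer hh)

lemma index_mul_card_pow {G : Type*} [Group G] [Finite G] (H : Subgroup G) {k : ℕ}
    (hk : 1 ≤ k) :
    (H.index : ℝ) * Nat.card H ^ k = Nat.card G ^ k / H.index ^ (k - 1) := by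
  obtain ⟨j, rfl⟩ := Nat.exists_eq_add_of_le' hk
  have : (H.index : ℝ) ≠ 0 := by exact_mod_cast H.index_ne_zero_of_finite
  rw [← H.card_mul_index, Nat.add_sub_cancel, Nat.cast_mul]
  field_simp
  ring

lemma ncard_generating_eq (k : ℕ) (G : Type*) [Group G] [Finite G] :
    ({v : Fin k → G | closure (Set.range v) = ⊤}.ncard : ℝ) = pgen k G * Nat.card G ^ k := by
  have : (Nat.card G : ℝ) ≠ 0 := by exact_mod_cast Nat.card_pos.ne'
  rw [pgen, div_mul_cancel₀ _ (pow_ne_zero _ this), ← Nat.card_coe_set_eq]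
  rfl

lemma pgen_nonneg (k : ℕ) (G : Type*) [Group G] : 0 ≤ pgen k G := by
  unfold pgen
  positivity

section Lifts

variable {Y X : Type*} [Group Y] [Group X]

def generatingLifts (π : Y →* X) (H : Subgroup Y) (k : ℕ) : Set (Fin k → Y) :=
  {v | (∀ i, v i ∈ H) ∧ closure (Set.range (π ∘ v)) = ⊤}

lemma ncard_generatingLifts [Finite Y] [Finite X] {π : Y →* X} {H : Subgroup Y}
    (hH : H.map π = ⊤) (k : ℕ) :
    ((generatingLifts π H k).ncard : ℝ) = pgen k X * Nat.card H ^ k := by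
  set g := (π.comp H.subtype).compLeft (Fin k)
  have hg : Function.Surjective g := by
    refine Function.Surjective.comp_left (g := π.comp H.subtype) ?_
    rw [← MonoidHom.range_eq_top, MonoidHom.range_comp, range_subtype, hH]
  have himage : generatingLifts π H k =
      (fun w i => (w i : Y)) '' (g ⁻¹' {w | closure (Set.range w) = ⊤}) := by
    ext v
    constructor
    · rintro ⟨hvH, hv⟩
      exact ⟨fun i => ⟨v i, hvH i⟩, hv, rfl⟩
    · rintro ⟨w, hw, rfl⟩
      exact ⟨fun i => (w i).2, hw⟩
  have hinj : Function.Injective fun (w : Fin k → H) i => (w i : Y) :=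
    fun w w' h => funext fun i => Subtype.ext (congrFun h i)
  have hcount := g.ncard_preimage_mul_card hg {w | closure (Set.range w) = ⊤}
  simp only [Nat.card_fun, Nat.card_eq_fintype_card, Fintype.card_fin] at hcount
  have hX : (Nat.card X : ℝ) ^ k ≠ 0 := pow_ne_zero _ (by exact_mod_cast Nat.card_pos.ne')
  rw [himage, Set.ncard_image_of_injective _ hinj, ← mul_left_inj' hX, mul_right_comm,
    ← ncard_generating_eq]
  exact_mod_cast hcount

lemma generatingLifts_eq_empty {π : Y →* X} {H : Subgroup Y} (hH : H.map π ≠ ⊤) (k : ℕ) :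
    generatingLifts π H k = ∅ := by
  refine Set.eq_empty_of_forall_notMem fun v ⟨hvH, hv⟩ => hH (top_le_iff.mp ?_)
  rw [← hv, Set.range_comp, ← MonoidHom.map_closure]
  exact map_mono ((closure_le H).mpr (Set.range_subset_iff.mpr hvH))

lemma ncard_generatingLifts_le [Finite Y] [Finite X] (π : Y →* X) (H : Subgroup Y) (k : ℕ) :
    ((generatingLifts π H k).ncard : ℝ) ≤ pgen k X * Nat.card H ^ k := by
  by_cases hH : H.map π = ⊤
  · exact (ncard_generatingLifts hH k).le
  · rw [generatingLifts_eq_empty hH, Set.ncard_empty, Nat.cast_zero]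
    exact mul_nonneg (pgen_nonneg k X) (by positivity)

lemma IsConjClassReps.exists_mem_orbit {π : Y →* X} {R : Finset (Subgroup Y)}
    (hR : IsConjClassReps π R) {N : Subgroup Y} (hN : IsCoatom N) (hNπ : N.map π = ⊤) :
    ∃ M ∈ R, N ∈ orbit (ConjAct Y) M := by
  obtain ⟨M, ⟨hM, y, hy⟩, -⟩ := hR.2 N hN hNπ
  exact ⟨M, hM, mem_orbit_symm.mp ⟨ConjAct.toConjAct y, hy⟩⟩

lemma generatingLifts_top_subset [Finite Y] {π : Y →* X} {R : Finset (Subgroup Y)}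
    (hR : IsConjClassReps π R) (k : ℕ) :
    generatingLifts π ⊤ k ⊆ {v | closure (Set.range v) = ⊤} ∪
      ⋃ M ∈ R, ⋃ N ∈ orbit (ConjAct Y) M, generatingLifts π N k := by
  rintro v ⟨-, hv⟩
  by_cases hgen : closure (Set.range v) = ⊤
  · exact Or.inl hgen
  obtain ⟨N, hN, hle⟩ := (eq_top_or_exists_le_coatom (closure (Set.range v))).resolve_left hgen
  have hvN : ∀ i, v i ∈ N := fun i => hle (subset_closure (Set.mem_range_self i))
  have hNπ : N.map π = ⊤ := by
    by_contra hNπ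
    exact (generatingLifts_eq_empty hNπ k).subset ⟨hvN, hv⟩
  obtain ⟨M, hM, hNM⟩ := hR.exists_mem_orbit hN hNπ
  simp only [Set.mem_union, Set.mem_iUnion]
  exact Or.inr ⟨M, hM, N, hNM, hvN, hv⟩

lemma ncard_biUnion_orbit_generatingLifts_le [Finite Y] [Finite X] (π : Y →* X)
    (M : Subgroup Y) (k : ℕ) :
    ((⋃ N ∈ orbit (ConjAct Y) M, generatingLifts π N k).ncard : ℝ) ≤
      M.index * (pgen k X * Nat.card M ^ k) := by
  have hfin := (orbit (ConjAct Y) M).toFinite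
  calc ((⋃ N ∈ orbit (ConjAct Y) M, generatingLifts π N k).ncard : ℝ)
      ≤ ∑ N ∈ hfin.toFinset, ((generatingLifts π N k).ncard : ℝ) := by
        have := hfin.toFinset.set_ncard_biUnion_le (generatingLifts π · k)
        simp only [Set.Finite.mem_toFinset] at this
        exact_mod_cast this
    _ ≤ ∑ N ∈ hfin.toFinset, pgen k X * Nat.card M ^ k := by
        refine Finset.sum_le_sum fun N hN => ?_
        obtain ⟨g, rfl⟩ := hfin.mem_toFinset.mp hN
        change ((generatingLifts π (g • M) k).ncard : ℝ) ≤ _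
        rw [Nat.card_congr (equivSMul g M).toEquiv]
        exact ncard_generatingLifts_le π _ k
    _ ≤ M.index * (pgen k X * Nat.card M ^ k) := by
        rw [Finset.sum_const, nsmul_eq_mul, ← Set.ncard_eq_toFinset_card _ hfin]
        have := pgen_nonneg k X
        gcongr
        exact_mod_cast ncard_orbit_conjAct_le_index M

lemma pgen_mul_card_pow_le [Finite Y] [Finite X] {π : Y →* X} (hπ : Function.Surjective π)
    {R : Finset (Subgroup Y)} (hR : IsConjClassReps π R) (k : ℕ) :
    pgen k X * Nat.card Y ^ k ≤
      pgen k Y * Nat.card Y ^ k + ∑ M ∈ R, M.index * (pgen k X * Nat.card M ^ k) := by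
  set U := ⋃ M ∈ R, ⋃ N ∈ orbit (ConjAct Y) M, generatingLifts π N k
  have hcover : (generatingLifts π ⊤ k).ncard ≤
      {v : Fin k → Y | closure (Set.range v) = ⊤}.ncard + U.ncard :=
    (Set.ncard_le_ncard (generatingLifts_top_subset hR k)).trans (Set.ncard_union_le _ _)
  have hU : (U.ncard : ℝ) ≤
      ∑ M ∈ R, ((⋃ N ∈ orbit (ConjAct Y) M, generatingLifts π N k).ncard : ℝ) := by
    exact_mod_cast R.set_ncard_biUnion_le _
  calc pgen k X * Nat.card Y ^ k = (generatingLifts π ⊤ k).ncard := by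
        rw [ncard_generatingLifts (by rwa [map_top_of_surjective]) k, card_top]
    _ ≤ {v : Fin k → Y | closure (Set.range v) = ⊤}.ncard + (U.ncard : ℝ) := by
        exact_mod_cast hcover
    _ ≤ _ := by
        rw [ncard_generating_eq]
        exact add_le_add_right (hU.trans (Finset.sum_le_sum fun M _ =>
          ncard_biUnion_orbit_generatingLifts_le π M k)) _

end Lifts

theorem bhattacharjee_inequality_general {Y X : Type*} [Group Y] [Group X] [Fintype Y]
    (π : Y →* X) (hπ : Function.Surjective π) (k : ℕ) (hk : 1 ≤ k)
    (R : Finset (Subgroup Y)) (hR : IsConjClassReps π R) :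
    pgen k Y ≥ (1 - ∑ M ∈ R, (1 : ℝ) / (M.index : ℝ) ^ (k - 1)) * pgen k X := by
  have : Finite X := Finite.of_surjective π hπ
  have hY : (0 : ℝ) < Nat.card Y ^ k := pow_pos (Nat.cast_pos.mpr Nat.card_pos) k
  have hsum : ∑ M ∈ R, (M.index : ℝ) * (pgen k X * Nat.card M ^ k) =
      pgen k X * Nat.card Y ^ k * ∑ M ∈ R, (1 : ℝ) / (M.index : ℝ) ^ (k - 1) := by
    rw [Finset.mul_sum]
    refine Finset.sum_congr rfl fun M _ => ?_
    rw [mul_left_comm, index_mul_card_pow M hk]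
    ring
  have h := pgen_mul_card_pow_le hπ hR k
  rw [hsum] at h
  rw [ge_iff_le, ← mul_le_mul_iff_left₀ hY]
  linarith

/-- Bhattacharjee's inequality: for a surjective homomorphism `π : Y → X`
of finite groups and `k ≥ 1`,
`p_k(Y) ≥ (1 - Σ_{[M] ∈ G(Y|X)} [Y:M]^{-(k-1)}) ⬝ p_k(X)`, the sum being over the
`Y`-conjugacy classes of proper maximal subgroups of `Y` surjecting onto `X`. -/
theorem bhattacharjee_inequality {Y X : Type*} [Group Y] [Group X] [Fintype Y] [Fintype X]
    (π : Y →* X) (hπ : Function.Surjective π) (k : ℕ) (hk : 1 ≤ k)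
    (R : Finset (Subgroup Y)) (hR : IsConjClassReps π R) :
    pgen k Y ≥ (1 - ∑ M ∈ R, (1 : ℝ) / (M.index : ℝ) ^ (k - 1)) * pgen k X :=
  bhattacharjee_inequality_general π hπ k hk R hR
end

section
/- Let L < Sym(D) be a nontrivial permutation group on a finite set D fixing some point j ∈ D. Then for every n ≥ 1 the iterated wreath product L_n has L^n as a quotient, and hence L_∞ admits L^ℕ as a quotient and is not topologically finitely generated. -/
variable {D : Type*}

/-- Splitting off the last letter: `D^{n+1} ≃ D^n × D`. -/
def snocEquiv (D : Type*) (n : ℕ) : (Fin (n + 1) → D) ≃ (Fin n → D) × D where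
  toFun v := (Fin.init v, v (Fin.last n))
  invFun p := Fin.snoc p.1 p.2
  left_inv v := Fin.snoc_init_self v
  right_inv p := by
    refine Prod.ext ?_ ?_
    · simp
    · simp

/-- The permutation `(v, d) ↦ (x v, f v d)` of `D^{n+1} = D^n × D`. -/
def twist {n : ℕ} (x : Equiv.Perm (Fin n → D)) (f : (Fin n → D) → Equiv.Perm D) :
    Equiv.Perm (Fin (n + 1) → D) :=
  (snocEquiv D n).trans (((x.prodShear f).trans (snocEquiv D n).symm))

lemma twist_mul {n : ℕ} (x₁ x₂ : Equiv.Perm (Fin n → D))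
    (f₁ f₂ : (Fin n → D) → Equiv.Perm D) :
    twist x₁ f₁ * twist x₂ f₂ = twist (x₁ * x₂) (fun v => f₁ (x₂ v) * f₂ v) := by
  ext w
  simp [twist, Equiv.prodShear, Equiv.Perm.mul_apply]

lemma twist_one {n : ℕ} :
    (twist (1 : Equiv.Perm (Fin n → D)) (fun _ => 1)) = 1 := by
  ext w
  simp [twist, Equiv.prodShear, snocEquiv]

lemma twist_inv {n : ℕ} (x : Equiv.Perm (Fin n → D)) (f : (Fin n → D) → Equiv.Perm D) :
    (twist x f)⁻¹ = twist x⁻¹ (fun v => (f (x⁻¹ v))⁻¹) := by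
  apply inv_eq_of_mul_eq_one_left
  rw [twist_mul]
  simp [twist_one]

/-- The `n`-fold iterated wreath product `L_n = F ≀ ⋯ ≀ F` of a permutation group
`F ≤ Sym(D)`, realized as a group of permutations of `D^n`; it is defined recursively
by `L_0 = 1` and `L_{n+1} = L_n ⋉ F^{D^n}`, where `(x, f)` acts on
`D^{n+1} = D^n × D` by `(v, d) ↦ (x v, f v d)`. -/
def IW (F : Subgroup (Equiv.Perm D)) : (n : ℕ) → Subgroup (Equiv.Perm (Fin n → D))
  | 0 => ⊤
  | (n + 1) =>
    { carrier := {π | ∃ x ∈ IW F n, ∃ f : (Fin n → D) → Equiv.Perm D,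
        (∀ v, f v ∈ F) ∧ π = twist x f}
      one_mem' := ⟨1, (IW F n).one_mem, fun _ => 1, fun _ => F.one_mem, twist_one.symm⟩
      mul_mem' := by
        rintro a b ⟨x₁, hx₁, f₁, hf₁, rfl⟩ ⟨x₂, hx₂, f₂, hf₂, rfl⟩
        exact ⟨x₁ * x₂, (IW F n).mul_mem hx₁ hx₂, fun v => f₁ (x₂ v) * f₂ v,
          fun v => F.mul_mem (hf₁ _) (hf₂ _), twist_mul x₁ x₂ f₁ f₂⟩
      inv_mem' := by
        rintro a ⟨x, hx, f, hf, rfl⟩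
        exact ⟨x⁻¹, (IW F n).inv_mem hx, fun v => (f (x⁻¹ v))⁻¹,
          fun v => F.inv_mem (hf _), twist_inv x f⟩ }

/-- The profinite group `L_∞ = lim← L_n`, realized concretely as the group of
compatible sequences `(g_n)_n` with `g_n ∈ L_n`: `g_n` is the permutation of `D^n`
induced by `g_{n+1}` by forgetting the last letter. -/
def IWlim (F : Subgroup (Equiv.Perm D)) : Subgroup (∀ n, Equiv.Perm (Fin n → D)) where
  carrier := {g | (∀ n, g n ∈ IW F n) ∧
    ∀ (n : ℕ) (v : Fin n → D) (d : D), Fin.init (g (n + 1) (Fin.snoc v d)) = g n v}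
  one_mem' := ⟨fun n => (IW F n).one_mem, fun n v d => by simp⟩
  mul_mem' := by
    rintro a b ⟨ha1, ha2⟩ ⟨hb1, hb2⟩
    refine ⟨fun n => (IW F n).mul_mem (ha1 n) (hb1 n), fun n v d => ?_⟩
    have h1 := hb2 n v d
    have : (a * b) (n + 1) (Fin.snoc v d) =
        a (n + 1) (Fin.snoc (Fin.init (b (n + 1) (Fin.snoc v d)))
          ((b (n + 1) (Fin.snoc v d)) (Fin.last n))) := by
      rw [Fin.snoc_init_self]
      rfl
    rw [this, ha2, h1]
    rfl
  inv_mem' := by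
    rintro a ⟨ha1, ha2⟩
    refine ⟨fun n => (IW F n).inv_mem (ha1 n), fun n v d => ?_⟩
    have key : a (n + 1) ((a⁻¹ (n + 1)) (Fin.snoc v d)) = Fin.snoc v d := by
      simp [Equiv.Perm.inv_def]
    have h2 : Fin.init (a (n + 1) (Fin.snoc (Fin.init ((a⁻¹ (n + 1)) (Fin.snoc v d)))
        (((a⁻¹ (n + 1)) (Fin.snoc v d)) (Fin.last n)))) =
        a n (Fin.init ((a⁻¹ (n + 1)) (Fin.snoc v d))) := ha2 n _ _
    rw [Fin.snoc_init_self, key] at h2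
    have h2' : a n (Fin.init ((a⁻¹ (n + 1)) (Fin.snoc v d))) = v := by
      rw [← h2]; simp
    have h3 := congrArg (⇑(a n)⁻¹) h2'
    simpa using h3

instance (priority := 50) discretePermTopology (α : Type*) :
    TopologicalSpace (Equiv.Perm α) := ⊥

instance (α : Type*) : DiscreteTopology (Equiv.Perm α) := ⟨rfl⟩

instance (priority := 50) discreteTopologicalGroup (G : Type*) [Group G]
    [TopologicalSpace G] [DiscreteTopology G] : IsTopologicalGroup G :=
  { toContinuousMul := inferInstance, toContinuousInv := inferInstance }

/-!
Because `L` fixes `j`, every element `twist x f` of `L_{n+1}` has `x` fixing the spine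
`(j, …, j) ∈ D^n`, so the cocycle rule `(x₁, f₁)(x₂, f₂) = (x₁x₂, (f₁ ∘ x₂) · f₂)` makes the
spine label `f (j, …, j)` a homomorphism `L_{n+1} → L`. Together with `L_{n+1} → L_n` this gives
`L_n → L^n` by induction, split by the elements whose labels are constant on each level.
Reading the labels along the infinite spine gives a continuous surjection `L_∞ → L^ℕ`. Finitely
many elements of `L^ℕ` agree on two coordinates by pigeonhole, so they lie in a proper closed
subgroup; hence `L^ℕ`, and with it `L_∞`, is not topologically finitely generated.
-/

lemma Fin.snoc_const {α : Type*} {n : ℕ} (a : α) :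
    (Fin.snoc (fun _ => a) a : Fin (n + 1) → α) = fun _ => a := by
  funext i
  refine Fin.lastCases ?_ (fun i => ?_) i <;> simp

theorem Pi.topologicalClosure_closure_ne_top {ι H : Type*} [Infinite ι] [Group H] [Finite H]
    [Nontrivial H] [TopologicalSpace H] [T2Space H] [IsTopologicalGroup H]
    {s : Set (ι → H)} (hs : s.Finite) : (Subgroup.closure s).topologicalClosure ≠ ⊤ := by
  classical
  intro htop
  have : Finite s := hs.to_subtype
  obtain ⟨m, n, hmn, hs_eq⟩ := Finite.exists_ne_map_eq_of_infinite fun i (x : s) => x.1 i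
  let E := (Pi.evalMonoidHom (fun _ => H) m).eqLocus (Pi.evalMonoidHom (fun _ => H) n)
  have hE : (Subgroup.closure s).topologicalClosure ≤ E :=
    Subgroup.topologicalClosure_minimal _
      ((Subgroup.closure_le E).2 fun x hx => congr_fun hs_eq ⟨x, hx⟩)
      (isClosed_eq (continuous_apply m) (continuous_apply n))
  obtain ⟨a, ha⟩ := exists_ne (1 : H)
  have hmem : Pi.mulSingle m a ∈ E := hE (htop ▸ Subgroup.mem_top _)
  change (Pi.mulSingle m a : ι → H) m = (Pi.mulSingle m a : ι → H) n at hmem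
  simp [Pi.mulSingle_eq_of_ne' hmn, ha] at hmem

lemma twist_snoc {n : ℕ} (x : Equiv.Perm (Fin n → D)) (f : (Fin n → D) → Equiv.Perm D)
    (v : Fin n → D) (d : D) : twist x f (Fin.snoc v d) = Fin.snoc (x v) (f v d) := by
  simp [twist, snocEquiv, Equiv.prodShear]

lemma twist_injective2 [Nonempty D] {n : ℕ} : Function.Injective2 (twist (D := D) (n := n)) := by
  intro x x' f f' h
  have hsnoc : ∀ v d, Fin.snoc (x v) (f v d) = (Fin.snoc (x' v) (f' v d) : Fin (n + 1) → D) :=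
    fun v d => by rw [← twist_snoc, ← twist_snoc, h]
  refine ⟨Equiv.ext fun v => ?_, funext fun v => Equiv.ext fun d => ?_⟩
  · exact (Fin.snoc_injective2 (hsnoc v (Classical.arbitrary D))).1
  · exact (Fin.snoc_injective2 (hsnoc v d)).2

namespace IW

variable {F : Subgroup (Equiv.Perm D)} {n : ℕ}

lemma mem_succ_iff {π : Equiv.Perm (Fin (n + 1) → D)} :
    π ∈ IW F (n + 1) ↔
      ∃ x ∈ IW F n, ∃ f : (Fin n → D) → Equiv.Perm D, (∀ v, f v ∈ F) ∧ π = twist x f :=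
  Iff.rfl

lemma twist_mem {x : Equiv.Perm (Fin n → D)} (hx : x ∈ IW F n)
    {f : (Fin n → D) → Equiv.Perm D} (hf : ∀ v, f v ∈ F) : twist x f ∈ IW F (n + 1) :=
  ⟨x, hx, f, hf, rfl⟩

lemma apply_const {j : D} (hj : ∀ g ∈ F, g j = j) :
    ∀ {n : ℕ} {π : Equiv.Perm (Fin n → D)}, π ∈ IW F n → π (fun _ => j) = fun _ => j
  | 0, _, _ => Subsingleton.elim _ _
  | n + 1, _, ⟨x, hx, f, hf, rfl⟩ => by
    rw [← Fin.snoc_const j, twist_snoc, apply_const hj hx, hj _ (hf _)]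

noncomputable def base (π : IW F (n + 1)) : Equiv.Perm (Fin n → D) :=
  (mem_succ_iff.mp π.2).choose

noncomputable def labels (π : IW F (n + 1)) : (Fin n → D) → Equiv.Perm D :=
  (mem_succ_iff.mp π.2).choose_spec.2.choose

lemma base_mem (π : IW F (n + 1)) : base π ∈ IW F n :=
  (mem_succ_iff.mp π.2).choose_spec.1

lemma labels_mem (π : IW F (n + 1)) (v : Fin n → D) : labels π v ∈ F :=
  (mem_succ_iff.mp π.2).choose_spec.2.choose_spec.1 v

lemma coe_eq_twist (π : IW F (n + 1)) :
    (π : Equiv.Perm (Fin (n + 1) → D)) = twist (base π) (labels π) :=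
  (mem_succ_iff.mp π.2).choose_spec.2.choose_spec.2

lemma base_labels_of_coe_eq [Nonempty D] {π : IW F (n + 1)} {x : Equiv.Perm (Fin n → D)}
    {f : (Fin n → D) → Equiv.Perm D} (h : (π : Equiv.Perm (Fin (n + 1) → D)) = twist x f) :
    base π = x ∧ labels π = f :=
  twist_injective2 ((coe_eq_twist π).symm.trans h)

lemma coe_mul_eq_twist (a b : IW F (n + 1)) :
    ((a * b : IW F (n + 1)) : Equiv.Perm (Fin (n + 1) → D)) =
      twist (base a * base b) (fun v => labels a (base b v) * labels b v) := by
  rw [Subgroup.coe_mul, coe_eq_twist a, coe_eq_twist b, twist_mul]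

noncomputable def restrict [Nonempty D] : IW F (n + 1) →* IW F n where
  toFun π := ⟨base π, base_mem π⟩
  map_one' := Subtype.ext (base_labels_of_coe_eq (π := 1) twist_one.symm).1
  map_mul' a b := Subtype.ext (base_labels_of_coe_eq (coe_mul_eq_twist a b)).1

lemma coe_restrict [Nonempty D] {π : IW F (n + 1)} {x : Equiv.Perm (Fin n → D)}
    {f : (Fin n → D) → Equiv.Perm D} (h : (π : Equiv.Perm (Fin (n + 1) → D)) = twist x f) :
    (restrict π : Equiv.Perm (Fin n → D)) = x :=
  (base_labels_of_coe_eq h).1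

noncomputable def spineLabel {j : D} (hj : ∀ g ∈ F, g j = j) : IW F (n + 1) →* F :=
  haveI : Nonempty D := ⟨j⟩
  { toFun π := ⟨labels π (fun _ => j), labels_mem π _⟩
    map_one' := Subtype.ext <| by
      show labels 1 (fun _ => j) = 1
      rw [(base_labels_of_coe_eq (π := 1) twist_one.symm).2]
    map_mul' a b := Subtype.ext <| by
      show labels (a * b) (fun _ => j) = labels a (fun _ => j) * labels b (fun _ => j)
      rw [(base_labels_of_coe_eq (coe_mul_eq_twist a b)).2]
      dsimp only
      rw [apply_const hj (base_mem b)] }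

lemma coe_spineLabel {j : D} (hj : ∀ g ∈ F, g j = j) {π : IW F (n + 1)}
    {x : Equiv.Perm (Fin n → D)} {f : (Fin n → D) → Equiv.Perm D}
    (h : (π : Equiv.Perm (Fin (n + 1) → D)) = twist x f) :
    (spineLabel hj π : Equiv.Perm D) = f (fun _ => j) :=
  haveI : Nonempty D := ⟨j⟩
  congr_fun (base_labels_of_coe_eq h).2 _

noncomputable def toPi {j : D} (hj : ∀ g ∈ F, g j = j) : (n : ℕ) → IW F n →* (Fin n → F)
  | 0 => 1
  | n + 1 =>
    haveI : Nonempty D := ⟨j⟩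
    { toFun π := Fin.snoc (toPi hj n (restrict π)) (spineLabel hj π)
      map_one' := by
        funext i
        refine Fin.lastCases ?_ (fun i => ?_) i <;> simp
      map_mul' a b := by
        funext i
        refine Fin.lastCases ?_ (fun i => ?_) i <;> simp }

noncomputable def levelwise : (n : ℕ) → (Fin n → F) → IW F n
  | 0, _ => 1
  | n + 1, t => ⟨twist (levelwise n (Fin.init t)) (fun _ => t (Fin.last n)),
      twist_mem (levelwise n _).2 fun _ => (t _).2⟩

lemma restrict_levelwise [Nonempty D] (t : Fin (n + 1) → F) :
    restrict (levelwise (n + 1) t) = levelwise n (Fin.init t) :=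
  Subtype.ext (coe_restrict rfl)

lemma spineLabel_levelwise {j : D} (hj : ∀ g ∈ F, g j = j) (t : Fin (n + 1) → F) :
    spineLabel hj (levelwise (n + 1) t) = t (Fin.last n) :=
  Subtype.ext (coe_spineLabel hj (f := fun _ => t (Fin.last n)) rfl)

lemma toPi_levelwise {j : D} (hj : ∀ g ∈ F, g j = j) :
    ∀ {n : ℕ} (t : Fin n → F), toPi hj n (levelwise n t) = t
  | 0, _ => Subsingleton.elim _ _
  | n + 1, t => by
    have : Nonempty D := ⟨j⟩
    show Fin.snoc _ _ = t
    rw [restrict_levelwise, spineLabel_levelwise, toPi_levelwise hj, Fin.snoc_init_self]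

lemma toPi_surjective {j : D} (hj : ∀ g ∈ F, g j = j) (n : ℕ) :
    Function.Surjective (toPi hj n) :=
  fun t => ⟨levelwise n t, toPi_levelwise hj t⟩

end IW

namespace IWlim

variable {F : Subgroup (Equiv.Perm D)}

def level (n : ℕ) : IWlim F →* IW F n :=
  ((Pi.evalMonoidHom _ n).comp (IWlim F).subtype).codRestrict _ fun g => g.2.1 n

lemma continuous_level (n : ℕ) : Continuous (level (F := F) n) :=
  ((continuous_apply n).comp continuous_subtype_val).subtype_mk _

noncomputable def spineLabels {j : D} (hj : ∀ g ∈ F, g j = j) : IWlim F →* (ℕ → F) :=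
  MonoidHom.pi fun k => (IW.spineLabel hj).comp (level (k + 1))

lemma continuous_spineLabels {j : D} (hj : ∀ g ∈ F, g j = j) :
    Continuous (spineLabels hj) :=
  continuous_pi fun k =>
    (continuous_of_discreteTopology (f := IW.spineLabel hj)).comp (continuous_level (k + 1))

noncomputable def levelwise (t : ℕ → F) : IWlim F :=
  ⟨fun n => IW.levelwise n fun i => t i, fun n => (IW.levelwise n _).2, fun n v d => by
    show Fin.init (twist _ _ (Fin.snoc v d)) = _
    rw [twist_snoc, Fin.init_snoc]
    rfl⟩

lemma spineLabels_surjective {j : D} (hj : ∀ g ∈ F, g j = j) :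
    Function.Surjective (spineLabels hj) :=
  fun t => ⟨levelwise t, funext fun _ => IW.spineLabel_levelwise hj _⟩

end IWlim

/-- if the nontrivial finite permutation group `L = F ≤ Sym(D)` fixes a
point `j ∈ D`, then for every `n ≥ 1` the `n`-fold iterated wreath product `L_n`
admits `L^n` as a quotient; consequently the profinite group `L_∞ = lim← L_n` admits
`L^ℕ` as a (topological) quotient and is not topologically finitely generated. -/
theorem iterated_wreath_not_topFG_of_fixed_point
    (D : Type) [Fintype D] (F : Subgroup (Equiv.Perm D)) [Nontrivial ↥F]
    (j : D) (hj : ∀ g ∈ F, g j = j) :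
    (∀ n : ℕ, 1 ≤ n → ∃ q : ↥(IW F n) →* (Fin n → ↥F), Function.Surjective q) ∧
    (∃ q : ↥(IWlim F) →* (ℕ → ↥F), Function.Surjective q ∧ Continuous q) ∧
    ¬ ∃ S : Finset ↥(IWlim F),
        (Subgroup.closure (S : Set ↥(IWlim F))).topologicalClosure = ⊤ := by
  have hsurj := IWlim.spineLabels_surjective hj
  have hcont := IWlim.continuous_spineLabels hj
  refine ⟨fun n _ => ⟨IW.toPi hj n, IW.toPi_surjective hj n⟩, ⟨_, hsurj, hcont⟩, ?_⟩
  rintro ⟨S, hS⟩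
  refine Pi.topologicalClosure_closure_ne_top (S.finite_toSet.image (IWlim.spineLabels hj)) ?_
  rw [← MonoidHom.map_closure]
  exact hsurj.denseRange.topologicalClosure_map_subgroup hcont hS
end

section
/- Let X be a finite group acting transitively on finite nonempty sets Ω_1,…,Ω_t, let B_1,…,B_t be nontrivial perfect finite groups, and Y = X ⋉ (B_1^{Ω_1} × ⋯ × B_t^{Ω_t}), with X permuting coordinates. If M < Y is a proper maximal clean subgroup, then Z(B_i) = (e) for all i. -/
/-!
The centre `Z = ∏ᵢ Z(Bᵢ)^{Ωᵢ}` of the base group `G = ∏ᵢ Bᵢ^{Ωᵢ}` is a standard subgroup, normal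
in `Y` because it is characteristic in `G`. If `Z ≰ M`, maximality gives `Y = M Z`, hence
`G = (M ∩ G) Z`; as `Z` is central, every commutator of `G` is a commutator of `M ∩ G`, and `G`,
a finite product of perfect groups, is perfect, so `G ≤ M`. Cleanness then forces `G = 1 ≥ Z`.
So in any case `Z ≤ M`, cleanness gives `Z = 1`, and `Z(Bᵢ) = 1` because `Ωᵢ` is nonempty.
-/

open SemidirectProduct

variable (X : Type*) [Group X] {t : ℕ} (Ω : Fin t → Type*) (B : Fin t → Type*)
  [∀ i, MulAction X (Ω i)] [∀ i, Group (B i)]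

/-- The action of `X` on `B₁^{Ω₁} × ⋯ × B_t^{Ω_t}` permuting the coordinates within each
factor according to the action of `X` on the `Ω_i`. -/
def permAutPi : X →* MulAut (∀ i, Ω i → B i) where
  toFun x :=
    { toFun := fun f i ω => f i (x⁻¹ • ω)
      invFun := fun f i ω => f i (x • ω)
      left_inv := fun f => by ext i ω; simp
      right_inv := fun f => by ext i ω; simp
      map_mul' := fun f g => rfl }
  map_one' := by ext f i ω; simp
  map_mul' := fun x y => by ext f i ω; simp [mul_smul]

/-- A *standard* normal subgroup of `Y = X ⋉ (B₁^{Ω₁} × ⋯ × B_t^{Ω_t})` is one of the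
form `∏ᵢ Nᵢ^{Ωᵢ}` with `Nᵢ ⊴ Bᵢ`. -/
def IsStandard (S : Subgroup ((∀ i, Ω i → B i) ⋊[permAutPi X Ω B] X)) : Prop :=
  ∃ N : ∀ i, Subgroup (B i), (∀ i, (N i).Normal) ∧
    S = Subgroup.map (inl : (∀ i, Ω i → B i) →* _)
      (Subgroup.pi Set.univ fun i => Subgroup.pi Set.univ fun _ : Ω i => N i)

open scoped commutatorElement

namespace Subgroup

variable {G : Type*} [Group G]

theorem commutatorElement_mul_mem_center {c₁ c₂ : G} (hc₁ : c₁ ∈ center G)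
    (hc₂ : c₂ ∈ center G) (g₁ g₂ : G) : ⁅g₁ * c₁, g₂ * c₂⁆ = ⁅g₁, g₂⁆ := by
  have hcomm {c : G} (hc : c ∈ center G) (g : G) : Commute c g := (mem_center_iff.mp hc g).symm
  calc ⁅g₁ * c₁, g₂ * c₂⁆ = g₁ * (c₁ * (g₂ * c₂) * c₁⁻¹) * g₁⁻¹ * (g₂ * c₂)⁻¹ := by group
    _ = g₁ * g₂ * (c₂ * g₁⁻¹ * c₂⁻¹) * g₂⁻¹ := by rw [(hcomm hc₁ _).mul_inv_cancel]; group
    _ = ⁅g₁, g₂⁆ := by rw [(hcomm hc₂ _).mul_inv_cancel, commutatorElement_def]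

theorem commutator_top_le_of_sup_center_eq_top {H : Subgroup G} (h : H ⊔ center G = ⊤) :
    ⁅(⊤ : Subgroup G), (⊤ : Subgroup G)⁆ ≤ H := by
  have hdecomp (g : G) : ∃ x ∈ H, ∃ c ∈ center G, x * c = g := by
    have hg : g ∈ ((H ⊔ center G : Subgroup G) : Set G) := h ▸ mem_top g
    rwa [mul_normal] at hg
  rw [commutator_le]
  intro g₁ _ g₂ _
  obtain ⟨x₁, hx₁, c₁, hc₁, rfl⟩ := hdecomp g₁
  obtain ⟨x₂, hx₂, c₂, hc₂, rfl⟩ := hdecomp g₂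
  rw [commutatorElement_mul_mem_center hc₁ hc₂, commutatorElement_def]
  exact mul_mem (mul_mem (mul_mem hx₁ hx₂) (inv_mem hx₁)) (inv_mem hx₂)

theorem commutator_top_eq_top_pi {η : Type*} [Finite η] {Gs : η → Type*} [∀ i, Group (Gs i)]
    (h : ∀ i, ⁅(⊤ : Subgroup (Gs i)), (⊤ : Subgroup (Gs i))⁆ = ⊤) :
    ⁅(⊤ : Subgroup (∀ i, Gs i)), (⊤ : Subgroup (∀ i, Gs i))⁆ = ⊤ := by
  rw [← pi_top (f := Gs) Set.univ, commutator_pi_pi_of_finite]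
  simp only [h]

theorem comap_sup_eq_top_of_sup_map_eq_top {N : Type*} [Group N] {φ : G →* N} {M : Subgroup N}
    {K : Subgroup G} [(K.map φ).Normal] (h : M ⊔ K.map φ = ⊤) : M.comap φ ⊔ K = ⊤ := by
  rw [eq_top_iff]
  intro g _
  have hg : φ g ∈ ((M ⊔ K.map φ : Subgroup N) : Set N) := h ▸ mem_top (φ g)
  rw [mul_normal] at hg
  obtain ⟨m, hm, _, ⟨k, hk, rfl⟩, hmk⟩ := hg
  have hgk : g * k⁻¹ ∈ M.comap φ := by
    rw [mem_comap, map_mul, map_inv, ← hmk, mul_inv_cancel_right]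
    exact hm
  simpa using mul_mem_sup hgk hk

theorem map_center_le_or_range_le_of_isCoatom {N : Type*} [Group N] {ι : G →* N}
    {M : Subgroup N} (hM : IsCoatom M)
    (hG : ⁅(⊤ : Subgroup G), (⊤ : Subgroup G)⁆ = ⊤) [((center G).map ι).Normal] :
    (center G).map ι ≤ M ∨ ι.range ≤ M := by
  refine or_iff_not_imp_left.mpr fun h => ?_
  have hsup := comap_sup_eq_top_of_sup_map_eq_top (hM.2 _ (left_lt_sup.mpr h))
  rw [MonoidHom.range_eq_map, map_le_iff_le_comap, ← hG]
  exact commutator_top_le_of_sup_center_eq_top hsup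

end Subgroup

namespace SemidirectProduct

variable {N G : Type*} [Group N] [Group G] {φ : G →* MulAut N}

theorem inl_conj (g : N ⋊[φ] G) (n : N) :
    g * inl n * g⁻¹ = inl (g.left * φ g.right n * g.left⁻¹) := by
  ext <;> simp [mul_assoc]

instance normal_map_inl (L : Subgroup N) [hL : L.Characteristic] :
    (L.map (inl : N →* N ⋊[φ] G)).Normal where
  conj_mem := by
    rintro _ ⟨n, hn, rfl⟩ g
    rw [inl_conj]
    refine Subgroup.mem_map_of_mem _ (Subgroup.Normal.conj_mem inferInstance _ ?_ _)
    exact Subgroup.characteristic_iff_le_comap.mp hL (φ g.right) hn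

end SemidirectProduct

open Subgroup

theorem center_trivial_of_clean_maximal
    [∀ i, Fintype (Ω i)] [∀ i, Nonempty (Ω i)]
    (hperf : ∀ i, ⁅(⊤ : Subgroup (B i)), (⊤ : Subgroup (B i))⁆ = ⊤)
    (M : Subgroup ((∀ i, Ω i → B i) ⋊[permAutPi X Ω B] X))
    (hM : IsCoatom M)
    (hclean : ∀ S, IsStandard X Ω B S → S ≤ M → S = ⊥) :
    ∀ i, Subgroup.center (B i) = ⊥ := by
  have hbase_perfect :
      ⁅(⊤ : Subgroup (∀ i, Ω i → B i)), (⊤ : Subgroup (∀ i, Ω i → B i))⁆ = ⊤ :=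
    commutator_top_eq_top_pi fun i => commutator_top_eq_top_pi fun _ => hperf i
  have hcenter_std : IsStandard X Ω B ((center (∀ i, Ω i → B i)).map inl) :=
    ⟨fun i => center (B i), fun _ => inferInstance, by simp_rw [Subgroup.center_pi]⟩
  have hbase_std : IsStandard X Ω B (inl : (∀ i, Ω i → B i) →* _).range :=
    ⟨fun _ => ⊤, fun _ => inferInstance, by rw [MonoidHom.range_eq_map]; simp_rw [pi_top]⟩
  have hcenter_le : (center (∀ i, Ω i → B i)).map inl ≤ M := by
    rcases map_center_le_or_range_le_of_isCoatom (ι := inl) hM hbase_perfect with hle | hbase_le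
    · exact hle
    · exact (map_le_range _ _).trans ((hclean _ hbase_std hbase_le).trans_le bot_le)
  have hcenter_bot : center (∀ i, Ω i → B i) = ⊥ :=
    (map_eq_bot_iff_of_injective _ inl_injective).mp (hclean _ hcenter_std hcenter_le)
  simpa [Subgroup.center_pi, pi_eq_bot_iff] using hcenter_bot
end

section
/- With Y = X ⋉ (B_1^{Ω_1} × ⋯ × B_t^{Ω_t}) as above, if M < Y is a proper maximal clean subgroup with π(M) = X (π : Y → X the projection), then the normal core M^0 = ∩_{y∈Y} yMy^{-1} intersects ∏_{i=1}^t B_i^{Ω_i} trivially; i.e., ∏ B_i^{Ω_i} acts faithfully on Y/M. -/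
open SemidirectProduct

variable (X : Type*) [Group X] {t : ℕ} (Ω : Fin t → Type*) (B : Fin t → Type*)
  [∀ i, MulAction X (Ω i)] [∀ i, Group (B i)]

/-!
Let `P` be the trace of the normal core on the base `K = ∏ᵢ Bᵢ^{Ωᵢ}`: it is normal in `K` and
invariant under `X`.

The centre `Z(K) = ∏ᵢ Z(Bᵢ)^{Ωᵢ}` is a standard subgroup, normal in `Y`, and it lies in `M`:
otherwise `M Z(K) = Y` by maximality, and as `Z(K)` is central in `K` every commutator of `K` then
lies in `M`; `K` is perfect, so `K ≤ M`, and `π(M) = X` gives `M = Y`. Cleanness forces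
`Z(Bᵢ) = 1`.

The largest standard subgroup `∏ᵢ Qᵢ^{Ωᵢ}` of `P` also lies in `M`, so every `Qᵢ` is trivial. For
`f ∈ P` and `c ∈ Bᵢ`, the commutator of `f` with `c` placed at `ω` is `⁅f ω, c⁆` placed at `ω`,
an element of `P`; moving `ω` around by the transitive action of `X` shows `⁅f ω, c⁆ ∈ Qᵢ = 1`.
Hence the values of `f` are central, hence trivial.
-/

open commutatorElement Group

instance Group.IsPerfect.pi {η : Type*} [Finite η] {G : η → Type*} [∀ i, Group (G i)]
    [∀ i, IsPerfect (G i)] : IsPerfect (∀ i, G i) := by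
  rw [isPerfect_def, commutator_def, ← Subgroup.pi_top, Subgroup.commutator_pi_pi_of_finite]
  simp only [← commutator_def, IsPerfect.commutator_eq_top]

theorem commutatorElement_mul_left_of_commute {G : Type*} [Group G] {a b s : G}
    (h : Commute s b) : ⁅a * s, b⁆ = ⁅a, b⁆ := by
  simp only [commutatorElement_def, mul_inv_rev, mul_assoc, h.eq, mul_inv_cancel_left]

theorem commutatorElement_mul_right_of_commute {G : Type*} [Group G] {a b s : G}
    (h : Commute a s) : ⁅a, b * s⁆ = ⁅a, b⁆ := by
  rw [← commutatorElement_inv, commutatorElement_mul_left_of_commute h.symm,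
    commutatorElement_inv]

theorem Subgroup.le_of_le_sup_of_le_centralizer {G : Type*} [Group G] {K M S : Subgroup G}
    [IsPerfect K] [S.Normal] (hSK : S ≤ K) (hKS : K ≤ centralizer S) (h : K ≤ M ⊔ S) :
    K ≤ M := by
  rw [← commutator_eq_self (H := K), commutator_le]
  intro a ha b hb
  obtain ⟨m, hm, s, hs, rfl⟩ := (mem_sup_of_normal_right (s := M)).1 (h ha)
  obtain ⟨m', hm', s', hs', rfl⟩ := (mem_sup_of_normal_right (s := M)).1 (h hb)
  have hmK : m ∈ K := by simpa using K.mul_mem ha (K.inv_mem (hSK hs))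
  rw [commutatorElement_mul_left_of_commute (mem_centralizer_iff.1 (hKS hb) s hs),
    commutatorElement_mul_right_of_commute (mem_centralizer_iff.1 (hKS hmK) s' hs').symm,
    commutatorElement_def]
  exact mul_mem (mul_mem (mul_mem hm hm') (inv_mem hm)) (inv_mem hm')

namespace SemidirectProduct

variable {N G : Type*} [Group N] [Group G] {φ : G →* MulAut N}

theorem normal_map_inl_s9 {P : Subgroup N} [P.Normal] (hP : ∀ g, ∀ n ∈ P, φ g n ∈ P) :
    (P.map (inl : N →* N ⋊[φ] G)).Normal := by
  constructor
  rintro _ ⟨n, hn, rfl⟩ y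
  refine ⟨y.left * φ y.right n * y.left⁻¹, ‹P.Normal›.conj_mem _ (hP _ _ hn) _, ?_⟩
  ext <;> simp

theorem eq_top_of_range_inl_le {M : Subgroup (N ⋊[φ] G)} (h : (inl : N →* N ⋊[φ] G).range ≤ M)
    (hM : M.map rightHom = ⊤) : M = ⊤ := by
  rw [← sup_eq_left.2 h, range_inl_eq_ker_rightHom, ← Subgroup.comap_map_eq, hM,
    Subgroup.comap_top]

theorem map_inl_center_le_of_isCoatom [IsPerfect N] {M : Subgroup (N ⋊[φ] G)} (hM : IsCoatom M)
    (hsurj : M.map rightHom = ⊤) : (Subgroup.center N).map inl ≤ M := by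
  by_contra hle
  have : ((Subgroup.center N).map (inl : N →* N ⋊[φ] G)).Normal :=
    normal_map_inl_s9 fun g _ hn => Subgroup.characteristic_iff_le_comap.1 inferInstance (φ g) hn
  have hsup : M ⊔ (Subgroup.center N).map inl = ⊤ := hM.2 _ (left_lt_sup.2 hle)
  have := IsPerfect.range (inl : N →* N ⋊[φ] G)
  refine hM.1 (eq_top_of_range_inl_le ?_ hsurj)
  refine Subgroup.le_of_le_sup_of_le_centralizer (Subgroup.map_le_range _ _) ?_
    (le_top.trans_eq hsup.symm)
  rintro _ ⟨n, rfl⟩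
  rw [Subgroup.mem_centralizer_iff]
  rintro _ ⟨z, hz, rfl⟩
  rw [← map_mul, ← map_mul, Subgroup.mem_center_iff.1 hz n]

end SemidirectProduct

section StandardSubgroups

variable {X B}

def standardPi (N : ∀ i, Subgroup (B i)) : Subgroup (∀ i, Ω i → B i) :=
  Subgroup.pi Set.univ fun i => Subgroup.pi Set.univ fun _ : Ω i => N i

theorem standardPi_eq_bot_iff [∀ i, Nonempty (Ω i)] {N : ∀ i, Subgroup (B i)} :
    standardPi Ω N = ⊥ ↔ ∀ i, N i = ⊥ := by
  simp only [standardPi, Subgroup.pi_eq_bot_iff, forall_const]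

theorem standardPi_center : standardPi Ω (fun i => Subgroup.center (B i)) = Subgroup.center _ := by
  simp only [standardPi, Subgroup.center_pi]

variable {Ω} in
theorem eq_bot_of_map_inl_standardPi_le [∀ i, Nonempty (Ω i)]
    {M : Subgroup ((∀ i, Ω i → B i) ⋊[permAutPi X Ω B] X)}
    (hclean : ∀ S, IsStandard X Ω B S → S ≤ M → S = ⊥) {N : ∀ i, Subgroup (B i)}
    [hN : ∀ i, (N i).Normal] (h : (standardPi Ω N).map inl ≤ M) : ∀ i, N i = ⊥ :=
  (standardPi_eq_bot_iff Ω).1 <|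
    (Subgroup.map_eq_bot_iff_of_injective _ inl_injective).1 (hclean _ ⟨N, hN, rfl⟩ h)

variable {Ω} [∀ i, DecidableEq (Ω i)]

def baseSingle (i : Fin t) (ω : Ω i) : B i →* ∀ i, Ω i → B i :=
  (MonoidHom.mulSingle _ i).comp (MonoidHom.mulSingle (fun _ : Ω i => B i) ω)

theorem standardPi_le_iff [∀ i, Finite (Ω i)] {N : ∀ i, Subgroup (B i)}
    {P : Subgroup (∀ i, Ω i → B i)} :
    standardPi Ω N ≤ P ↔ ∀ i ω, (N i).map (baseSingle i ω) ≤ P := by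
  simp only [standardPi, Subgroup.pi_le_iff, Subgroup.map_le_iff_le_comap, Subgroup.comap_comap]
  exact Iff.rfl

theorem permAutPi_baseSingle (x : X) (i : Fin t) (ω : Ω i) (b : B i) :
    permAutPi X Ω B x (baseSingle i ω b) = baseSingle i (x • ω) b := by
  ext j ω'
  rcases eq_or_ne j i with rfl | hj
  · simp [baseSingle, permAutPi, Pi.mulSingle_apply, inv_smul_eq_iff]
  · simp [baseSingle, permAutPi, hj]

theorem commutatorElement_baseSingle (f : ∀ i, Ω i → B i) (i : Fin t) (ω : Ω i) (c : B i) :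
    ⁅f, baseSingle i ω c⁆ = baseSingle i ω ⁅f i ω, c⁆ := by
  ext j ω'
  rcases eq_or_ne j i with rfl | hj
  · rcases eq_or_ne ω' ω with rfl | hω
    · simp [baseSingle, commutatorElement_def]
    · simp [baseSingle, commutatorElement_def, hω]
  · simp [baseSingle, commutatorElement_def, hj]

end StandardSubgroups

section StandardCore

variable {X Ω B} [∀ i, DecidableEq (Ω i)]

def standardCore (P : Subgroup (∀ i, Ω i → B i)) (i : Fin t) : Subgroup (B i) :=
  ⨅ ω, P.comap (baseSingle i ω)

instance standardCore_normal (P : Subgroup (∀ i, Ω i → B i)) [hP : P.Normal] {i : Fin t} :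
    (standardCore P i).Normal :=
  Subgroup.normal_iInf_normal fun _ => hP.comap _

theorem standardPi_standardCore_le [∀ i, Finite (Ω i)] (P : Subgroup (∀ i, Ω i → B i)) :
    standardPi Ω (standardCore P) ≤ P :=
  standardPi_le_iff.2 fun _ ω => Subgroup.map_le_iff_le_comap.2 (iInf_le _ ω)

theorem commutatorElement_mem_standardCore [∀ i, MulAction.IsPretransitive X (Ω i)]
    {P : Subgroup (∀ i, Ω i → B i)} [P.Normal] (hP : ∀ x : X, ∀ f ∈ P, permAutPi X Ω B x f ∈ P)
    {f : ∀ i, Ω i → B i} (hf : f ∈ P) (i : Fin t) (ω : Ω i) (c : B i) :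
    ⁅f i ω, c⁆ ∈ standardCore P i := by
  refine Subgroup.mem_iInf.2 fun ω' => ?_
  obtain ⟨x, rfl⟩ := MulAction.exists_smul_eq X ω ω'
  rw [Subgroup.mem_comap, ← permAutPi_baseSingle, ← commutatorElement_baseSingle]
  exact hP x _ (Subgroup.commutator_le_left P ⊤ (Subgroup.commutator_mem_commutator hf
    (Subgroup.mem_top _)))

theorem eq_bot_of_standardCore_eq_bot [∀ i, MulAction.IsPretransitive X (Ω i)]
    (hcenter : ∀ i, Subgroup.center (B i) = ⊥) {P : Subgroup (∀ i, Ω i → B i)} [P.Normal]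
    (hP : ∀ x : X, ∀ f ∈ P, permAutPi X Ω B x f ∈ P) (hcore : ∀ i, standardCore P i = ⊥) :
    P = ⊥ := by
  refine (Subgroup.eq_bot_iff_forall _).2 fun f hf => funext fun i => funext fun ω => ?_
  have hcomm : ∀ c : B i, ⁅f i ω, c⁆ = 1 := fun c => by
    simpa [hcore i] using commutatorElement_mem_standardCore hP hf i ω c
  have hfc : f i ω ∈ Subgroup.center (B i) := Subgroup.mem_center_iff.2 fun c =>
    (commutatorElement_eq_one_iff_mul_comm.1 (hcomm c)).symm
  simpa [hcenter i] using hfc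

end StandardCore

theorem normalCore_inf_base_eq_bot_of_clean_maximal
    [∀ i, Fintype (Ω i)] [∀ i, Nonempty (Ω i)]
    [∀ i, MulAction.IsPretransitive X (Ω i)]
    (hperf : ∀ i, ⁅(⊤ : Subgroup (B i)), (⊤ : Subgroup (B i))⁆ = ⊤)
    (M : Subgroup ((∀ i, Ω i → B i) ⋊[permAutPi X Ω B] X))
    (hM : IsCoatom M)
    (hclean : ∀ S, IsStandard X Ω B S → S ≤ M → S = ⊥)
    (hsurj : M.map (rightHom : _ →* X) = ⊤) :
    M.normalCore ⊓ (inl : (∀ i, Ω i → B i) →* _).range = ⊥ := by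
  classical
  rw [inf_comm, ← Subgroup.map_comap_eq]
  refine (Subgroup.map_eq_bot_iff_of_injective _ inl_injective).2 ?_
  have : ∀ i, IsPerfect (B i) := fun i => ⟨hperf i⟩
  have hcenter : ∀ i, Subgroup.center (B i) = ⊥ := by
    refine eq_bot_of_map_inl_standardPi_le hclean ?_
    rw [standardPi_center]
    exact map_inl_center_le_of_isCoatom hM hsurj
  set P := M.normalCore.comap (inl : (∀ i, Ω i → B i) →* _)
  have hPM : P.map inl ≤ M := (Subgroup.map_comap_le _ _).trans M.normalCore_le
  have hPinv : ∀ x : X, ∀ f ∈ P, permAutPi X Ω B x f ∈ P := fun x f hf => by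
    simpa [P, inl_aut] using M.normalCore_normal.conj_mem _ hf (inr x)
  have hcore := eq_bot_of_map_inl_standardPi_le hclean
    ((Subgroup.map_mono (standardPi_standardCore_le P)).trans hPM)
  exact eq_bot_of_standardCore_eq_bot hcenter hPinv hcore
end

section
/- Let X act transitively on a finite set Ω, B a finite perfect centerless group, Y = X ⋉ B^Ω, M < Y proper maximal clean with π(M) = X. If M ∩ B^Ω ≠ (e), pr_ω(M ∩ B^Ω) = B for all ω, and there exists a minimal normal subgroup N ⊴ B with M ∩ N^Ω ≠ (e), then N is a direct product of isomorphic non-abelian simple groups, pr_ω(M ∩ N^Ω) = N for all ω ∈ Ω, and M = N_Y(M ∩ N^Ω). -/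
/-!
Write `A = N^Ω ⊴ Y`. The projections of `M ∩ A` are normal in `B` (as `pr_ω(M ∩ B^Ω) = B`) and
nontrivial (an element of `M` over a suitable `x ∈ X` moves a nontrivial coordinate to `ω`), so
they equal `N`. As `A ⊴ Y`, `M` normalizes `M ∩ A`, so by maximality `N_Y(M ∩ A)` is `M` or `Y`.
If it were `Y`, the same argument with `Y` in place of `M` shows that every projection of the
normal subgroup `M ∩ A` is `N`; since `B` is centerless, `[B, N] = N`, and commutators with the
coordinate copies of `B` then put all of `A` into `M`, against cleanness. If `N` were abelian,
`A` would centralize `M ∩ A` and so lie in `N_Y(M ∩ A) = M`.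

The `B`-conjugates of a minimal normal subgroup of `N` are minimal normal in `N` and generate it.
An irredundant subfamily is independent, so `N` is its internal direct product, and a minimal
normal subgroup that is a direct factor is simple.
-/

open SemidirectProduct

variable (X : Type*) [Group X] (Ω : Type*) (B : Type*) [MulAction X Ω] [Group B]

/-- The action of `X` on `B^Ω` permuting the coordinates. -/
def permAut : X →* MulAut (Ω → B) where
  toFun x :=
    { toFun := fun f ω => f (x⁻¹ • ω)
      invFun := fun f ω => f (x • ω)
      left_inv := fun f => by ext ω; simp
      right_inv := fun f => by ext ω; simp
      map_mul' := fun f g => rfl }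
  map_one' := by ext f ω; simp
  map_mul' := fun x y => by ext f ω; simp [mul_smul]

namespace Subgroup

variable {G : Type*} [Group G]

theorem normal_map_of_le_normalizer {G' : Type*} [Group G'] (f : G →* G') {H J : Subgroup G}
    (hJ : J ≤ normalizer (H : Set G)) (hJf : J.map f = ⊤) : (H.map f).Normal := by
  refine ⟨?_⟩
  rintro _ ⟨h, hh, rfl⟩ b
  obtain ⟨j, hj, rfl⟩ := mem_map.mp (hJf ▸ mem_top b : b ∈ J.map f)
  exact ⟨j * h * j⁻¹, (mem_normalizer_iff.mp (hJ hj) h).mp hh, by simp⟩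

open scoped commutatorElement in
theorem pi_commutator_map_eval_le {ι : Type*} [Finite ι] {G : ι → Type*} [∀ i, Group (G i)]
    (H : Subgroup (∀ i, G i)) [H.Normal] :
    pi Set.univ (fun i => ⁅(⊤ : Subgroup (G i)), H.map (Pi.evalMonoidHom G i)⁆) ≤ H := by
  classical
  rw [pi_le_iff]
  intro i
  rw [map_le_iff_le_comap, commutator_le]
  rintro b - _ ⟨h, hh, rfl⟩
  have : MonoidHom.mulSingle G i ⁅b, Pi.evalMonoidHom G i h⁆ = ⁅Pi.mulSingle i b, h⁆ := by
    funext j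
    by_cases hj : j = i
    · subst hj; simp [commutatorElement_def]
    · simp [commutatorElement_def, Pi.mulSingle_eq_of_ne hj]
  rw [mem_comap, this]
  exact commutator_le_right ⊤ H (commutator_mem_commutator (mem_top _) hh)

def IsMinimalNormal (H : Subgroup G) : Prop :=
  Minimal (fun K : Subgroup G => K.Normal ∧ K ≠ ⊥) H

namespace IsMinimalNormal

variable {H K : Subgroup G}

theorem normal (hH : H.IsMinimalNormal) : H.Normal := hH.1.1

theorem ne_bot (hH : H.IsMinimalNormal) : H ≠ ⊥ := hH.1.2

theorem eq_bot_or_eq (hH : H.IsMinimalNormal) (hK : K.Normal) (hKH : K ≤ H) : K = ⊥ ∨ K = H :=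
  or_iff_not_imp_left.mpr fun hK' => le_antisymm hKH (hH.2 ⟨hK, hK'⟩ hKH)

theorem of_eq_bot_or_eq (hH : H.Normal) (hbot : H ≠ ⊥)
    (hmin : ∀ K : Subgroup G, K.Normal → K ≤ H → K = ⊥ ∨ K = H) : H.IsMinimalNormal :=
  ⟨⟨hH, hbot⟩, fun K hK hKH => ((hmin K hK.1 hKH).resolve_left hK.2).ge⟩

theorem disjoint (hH : H.IsMinimalNormal) (hK : K.IsMinimalNormal) (hHK : H ≠ K) :
    Disjoint H K := by
  have := hH.normal
  have := hK.normal
  refine disjoint_iff.mpr ((hH.eq_bot_or_eq inferInstance inf_le_left).resolve_right fun h => ?_)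
  exact hHK ((hK.eq_bot_or_eq hH.normal (inf_eq_left.mp h)).resolve_left hH.ne_bot)

theorem map_mulEquiv {G' : Type*} [Group G'] (hH : H.IsMinimalNormal) (e : G ≃* G') :
    (H.map e.toMonoidHom).IsMinimalNormal := by
  refine of_eq_bot_or_eq (hH.normal.map _ e.surjective)
    ((map_eq_bot_iff_of_injective _ e.injective).not.mpr hH.ne_bot) fun K hK hKH => ?_
  have hK' : K.map e.symm.toMonoidHom ≤ H := by
    simpa [map_map] using map_mono (f := e.symm.toMonoidHom) hKH
  have hKK : K = (K.map e.symm.toMonoidHom).map e.toMonoidHom := by simp [map_map]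
  rcases hH.eq_bot_or_eq (hK.map _ e.symm.surjective) hK' with h | h <;> rw [hKK, h]
  · exact Or.inl (map_bot _)
  · exact Or.inr rfl

theorem commutator_top_eq (hH : H.IsMinimalNormal) (hZ : center G = ⊥) :
    ⁅(⊤ : Subgroup G), H⁆ = H := by
  have := hH.normal
  refine (hH.eq_bot_or_eq (commutator_normal (⊤ : Subgroup G) H)
    (commutator_le_right ⊤ H)).resolve_left fun h => ?_
  refine hH.ne_bot (le_bot_iff.mp (hZ ▸ ?_))
  rw [← centralizer_univ, ← coe_top, le_centralizer_iff]
  exact commutator_eq_bot_iff_le_centralizer.mp h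

theorem isSimpleGroup (hH : H.IsMinimalNormal) (htop : H ⊔ centralizer H = ⊤) :
    IsSimpleGroup H := by
  have := (nontrivial_iff_ne_bot H).mpr hH.ne_bot
  refine ⟨fun K hK => ?_⟩
  have hKH : K.map H.subtype ≤ H := map_subtype_le K
  have hnorm : (K.map H.subtype).Normal := by
    rw [← normalizer_eq_top_iff, eq_top_iff, ← htop]
    refine sup_le ?_ ((centralizer_le hKH).trans (centralizer_le_normalizer _))
    rw [← normal_subgroupOf_iff_le_normalizer hKH]
    rwa [subgroupOf, comap_map_eq_self_of_injective H.subtype_injective]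
  rcases hH.eq_bot_or_eq hnorm hKH with h | h
  · exact Or.inl ((map_eq_bot_iff_of_injective _ H.subtype_injective).mp h)
  · refine Or.inr (map_injective H.subtype_injective ?_)
    rw [h, ← MonoidHom.range_eq_map, range_subtype]

end IsMinimalNormal

theorem sSupIndep_of_minimal_sSup_eq_top {S : Finset (Subgroup G)}
    (hS : ∀ H ∈ S, H.IsMinimalNormal)
    (hmin : Minimal (fun S' : Finset (Subgroup G) => sSup (S' : Set (Subgroup G)) = ⊤) S) :
    sSupIndep (S : Set (Subgroup G)) := by
  classical
  intro H hH
  have := (hS H hH).normal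
  have : (sSup ((S : Set (Subgroup G)) \ {H})).Normal :=
    sSup_normal _ fun K hK => (hS K hK.1).normal
  refine disjoint_iff.mpr (((hS H hH).eq_bot_or_eq inferInstance inf_le_left).resolve_right
    fun h => Finset.notMem_erase H S (hmin.2 ?_ (Finset.erase_subset H S) hH))
  calc sSup ↑(S.erase H) = H ⊔ sSup ↑(S.erase H) := by
        rw [Finset.coe_erase, sup_eq_right.mpr (inf_eq_left.mp h)]
    _ = ⊤ := by rw [← sSup_insert, ← Finset.coe_insert, Finset.insert_erase hH, hmin.1]

theorem exists_mulEquiv_pi_of_sSup_eq_top {S : Finset (Subgroup G)}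
    (hS : ∀ H ∈ S, H.IsMinimalNormal) (htop : sSup (S : Set (Subgroup G)) = ⊤) :
    ∃ S' ⊆ S, (∀ H ∈ S', IsSimpleGroup H) ∧ Nonempty (G ≃* ∀ H : S', ↥(H : Subgroup G)) := by
  obtain ⟨S', hS'S, hmin⟩ := exists_minimal_le_of_wellFoundedLT
    (fun S' : Finset (Subgroup G) => sSup (S' : Set (Subgroup G)) = ⊤) S htop
  have hS' : ∀ H ∈ S', H.IsMinimalNormal := fun H hH => hS H (hS'S hH)
  have hcomm : Pairwise fun H K : S' =>
      ∀ x y, x ∈ (H : Subgroup G) → y ∈ (K : Subgroup G) → Commute x y := fun H K hHK =>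
    commute_of_normal_of_disjoint _ _ (hS' H H.2).normal (hS' K K.2).normal
      ((hS' H H.2).disjoint (hS' K K.2) (Subtype.coe_injective.ne hHK))
  refine ⟨S', hS'S, fun H hH => (hS' H hH).isSimpleGroup ?_,
    ⟨(MulEquiv.ofBijective (noncommPiCoprod hcomm) ⟨?_, ?_⟩).symm⟩⟩
  · rw [eq_top_iff, ← hmin.1]
    refine sSup_le fun K hK => ?_
    by_cases hKH : K = H
    · exact hKH ▸ le_sup_left
    · exact le_sup_of_le_right fun y hy => mem_centralizer_iff.mpr fun x hx =>
        (hcomm (i := ⟨H, hH⟩) (j := ⟨K, hK⟩) (by simpa [eq_comm] using hKH) x y hx hy).eq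
  · exact injective_noncommPiCoprod_of_iSupIndep
      ((sSupIndep_iff _).mp (sSupIndep_of_minimal_sSup_eq_top hS' hmin))
  · rw [← MonoidHom.range_eq_top, noncommPiCoprod_range, ← hmin.1, sSup_eq_iSup']
    rfl

theorem exists_mulEquiv_fin_pi_of_sSup_eq_top [Nontrivial G] {T : Type*} [Group T]
    {S : Finset (Subgroup G)} (hS : ∀ H ∈ S, H.IsMinimalNormal)
    (hT : ∀ H ∈ S, Nonempty (H ≃* T)) (htop : sSup (S : Set (Subgroup G)) = ⊤) :
    IsSimpleGroup T ∧ ∃ r, 0 < r ∧ Nonempty (G ≃* (Fin r → T)) := by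
  obtain ⟨S', hS'S, hsimple, ⟨e⟩⟩ := exists_mulEquiv_pi_of_sSup_eq_top hS htop
  obtain ⟨H₀, hH₀⟩ : S'.Nonempty := by
    rw [Finset.nonempty_iff_ne_empty]
    rintro rfl
    exact not_subsingleton G e.injective.subsingleton
  have := hsimple H₀ hH₀
  let eT : ∀ H : S', (H : Subgroup G) ≃* T := fun H => (hT H (hS'S H.2)).some
  exact ⟨(eT ⟨H₀, hH₀⟩).symm.isSimpleGroup, S'.card, Finset.card_pos.mpr ⟨H₀, hH₀⟩,
    ⟨e.trans ((MulEquiv.piCongrRight eT).trans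
      (MulEquiv.arrowCongr S'.equivFin (MulEquiv.refl T)))⟩⟩

theorem normal_map_subtype_iSup_conjNormal (N : Subgroup G) [N.Normal] (T : Subgroup N) :
    ((⨆ g : G, T.map (MulAut.conjNormal g).toMonoidHom).map N.subtype).Normal := by
  set K := ⨆ g : G, T.map (MulAut.conjNormal g).toMonoidHom
  have hK : ∀ g : G, K.map (MulAut.conjNormal g).toMonoidHom ≤ K := fun g => by
    rw [map_iSup]
    refine iSup_le fun g' => ?_
    rw [map_map]
    convert le_iSup (fun g : G => T.map (MulAut.conjNormal g).toMonoidHom) (g * g') using 2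
    rw [map_mul]
    rfl
  refine ⟨?_⟩
  rintro _ ⟨x, hx, rfl⟩ g
  exact ⟨_, hK g ⟨x, hx, rfl⟩, MulAut.conjNormal_apply g x⟩

theorem IsMinimalNormal.exists_mulEquiv_fin_pi [Finite G] {N : Subgroup G}
    (hN : N.IsMinimalNormal) :
    ∃ T : Subgroup N, IsSimpleGroup T ∧ ∃ r, 0 < r ∧ Nonempty (N ≃* (Fin r → T)) := by
  classical
  have := Fintype.ofFinite G
  have := hN.normal
  have := (nontrivial_iff_ne_bot N).mpr hN.ne_bot
  obtain ⟨T, -, hT⟩ := exists_minimal_le_of_wellFoundedLT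
    (fun K : Subgroup N => K.Normal ∧ K ≠ ⊥) ⊤ ⟨inferInstance, top_ne_bot⟩
  have hT : T.IsMinimalNormal := hT
  set conj : G → Subgroup N := fun g => T.map (MulAut.conjNormal g).toMonoidHom
  have hsup : ⨆ g, conj g = ⊤ := by
    have hbot : (⨆ g, conj g).map N.subtype ≠ ⊥ := by
      rw [Ne, map_eq_bot_iff_of_injective _ N.subtype_injective, ← le_bot_iff]
      exact fun h => (hT.map_mulEquiv (MulAut.conjNormal 1)).ne_bot
        (le_bot_iff.mp ((le_iSup conj 1).trans h))
    refine map_injective N.subtype_injective ?_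
    rw [(hN.eq_bot_or_eq (normal_map_subtype_iSup_conjNormal N T) (map_subtype_le _)).resolve_left
      hbot, ← MonoidHom.range_eq_map, range_subtype]
  refine ⟨T, exists_mulEquiv_fin_pi_of_sSup_eq_top (S := Finset.univ.image conj)
    (Finset.forall_mem_image.mpr fun g _ => hT.map_mulEquiv _)
    (Finset.forall_mem_image.mpr fun g _ =>
      ⟨(T.equivMapOfInjective _ (MulAut.conjNormal g).injective).symm⟩) ?_⟩
  rwa [Finset.coe_image, Finset.coe_univ, Set.image_univ, sSup_range]

theorem IsMinimalNormal.exists_nonabelian_simple_pow [Finite G] {N : Subgroup G}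
    (hN : N.IsMinimalNormal) (hNA : ∃ a b : N, a * b ≠ b * a) :
    ∃ (T : Type) (_ : Group T), IsSimpleGroup T ∧ (∃ a b : T, a * b ≠ b * a) ∧
      ∃ r : ℕ, 0 < r ∧ Nonempty (N ≃* (Fin r → T)) := by
  obtain ⟨T, hT, r, hr, ⟨e⟩⟩ := hN.exists_mulEquiv_fin_pi
  let eT : Shrink.{0} T ≃* T := Shrink.mulEquiv
  let e' : N ≃* (Fin r → Shrink.{0} T) := e.trans (MulEquiv.arrowCongr (Equiv.refl _) eT.symm)
  refine ⟨Shrink.{0} T, inferInstance, eT.isSimpleGroup, ?_, r, hr, ⟨e'⟩⟩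
  obtain ⟨a, b, hab⟩ := hNA
  by_contra! hcomm
  exact hab (e'.injective (by rw [map_mul, map_mul]; exact funext fun i => hcomm _ _))

end Subgroup

open Subgroup

section permAut

variable {X Ω B}

theorem permAut_apply (x : X) (f : Ω → B) (ω : Ω) : permAut X Ω B x f ω = f (x⁻¹ • ω) := rfl

theorem conj_inl (y : (Ω → B) ⋊[permAut X Ω B] X) (f : Ω → B) :
    y * inl f * y⁻¹ = inl (y.left * permAut X Ω B y.right f * y.left⁻¹) := by
  ext ω
  · simp [permAut_apply, mul_assoc]
  · simp

theorem normal_map_inl_pi {N : Subgroup B} (hN : N.Normal) :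
    ((pi Set.univ fun _ : Ω => N).map
      (inl : (Ω → B) →* (Ω → B) ⋊[permAut X Ω B] X)).Normal := by
  refine ⟨?_⟩
  rintro _ ⟨f, hf, rfl⟩ y
  rw [conj_inl]
  exact ⟨_, fun ω _ => hN.conj_mem _ (hf _ trivial) _, rfl⟩

theorem map_inl_pi_le_centralizer {N : Subgroup B} (hN : ∀ a b : N, a * b = b * a) :
    (pi Set.univ fun _ : Ω => N).map (inl : (Ω → B) →* (Ω → B) ⋊[permAut X Ω B] X) ≤
      centralizer ↑((pi Set.univ fun _ : Ω => N).map
        (inl : (Ω → B) →* (Ω → B) ⋊[permAut X Ω B] X)) := by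
  rintro _ ⟨f, hf, rfl⟩
  rw [mem_centralizer_iff]
  rintro _ ⟨g, hg, rfl⟩
  rw [← map_mul, ← map_mul]
  exact congrArg inl (funext fun ω => congrArg Subtype.val
    (hN ⟨g ω, hg ω trivial⟩ ⟨f ω, hf ω trivial⟩))

variable [MulAction.IsPretransitive X Ω]

theorem map_eval_comap_inl_ne_bot {L J : Subgroup ((Ω → B) ⋊[permAut X Ω B] X)}
    (hJL : J ≤ normalizer (L : Set _)) (hJ : J.map rightHom = ⊤) (hL : L.comap inl ≠ ⊥)
    (ω : Ω) : (L.comap inl).map (Pi.evalMonoidHom (fun _ : Ω => B) ω) ≠ ⊥ := by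
  obtain ⟨⟨f, hfL⟩, hf⟩ := (ne_bot_iff_exists_ne_one).mp hL
  obtain ⟨ω₀, hω₀⟩ := Function.ne_iff.mp (fun h => hf (Subtype.ext h))
  obtain ⟨x, rfl⟩ := MulAction.exists_smul_eq X ω₀ ω
  obtain ⟨y, hyJ, rfl⟩ := mem_map.mp (hJ ▸ mem_top x : x ∈ J.map rightHom)
  have hmem : y.left * permAut X Ω B y.right f * y.left⁻¹ ∈ L.comap inl := by
    rw [mem_comap, ← conj_inl]
    exact (mem_normalizer_iff.mp (hJL hyJ) _).mp hfL
  intro hbot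
  have := hbot ▸ mem_map_of_mem (Pi.evalMonoidHom (fun _ : Ω => B) (y.right • ω₀)) hmem
  exact hω₀ (by simpa [permAut_apply] using this)

theorem map_eval_comap_inl_eq {N : Subgroup B} (hN : N.IsMinimalNormal)
    {L J : Subgroup ((Ω → B) ⋊[permAut X Ω B] X)}
    (hLN : L ≤ (pi Set.univ fun _ : Ω => N).map inl) (hJL : J ≤ normalizer (L : Set _))
    (hJX : J.map rightHom = ⊤)
    (hJB : ∀ ω, (J.comap inl).map (Pi.evalMonoidHom (fun _ : Ω => B) ω) = ⊤)
    (hL : L.comap inl ≠ ⊥) (ω : Ω) :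
    (L.comap inl).map (Pi.evalMonoidHom (fun _ : Ω => B) ω) = N := by
  have hnormal := normal_map_of_le_normalizer _
    ((comap_mono hJL).trans (le_normalizer_comap inl)) (hJB ω)
  have hle : (L.comap inl).map (Pi.evalMonoidHom (fun _ : Ω => B) ω) ≤ N := by
    rintro _ ⟨f, hf, rfl⟩
    obtain ⟨g, hg, hgf⟩ := hLN hf
    exact inl_injective hgf ▸ hg ω trivial
  exact (hN.eq_bot_or_eq hnormal hle).resolve_left (map_eval_comap_inl_ne_bot hJL hJX hL ω)

theorem map_inl_pi_le_of_normal [Finite Ω] (hZ : center B = ⊥) {N : Subgroup B}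
    (hN : N.IsMinimalNormal) {K : Subgroup ((Ω → B) ⋊[permAut X Ω B] X)} [K.Normal]
    (hKN : K ≤ (pi Set.univ fun _ : Ω => N).map inl) (hK_ne : K.comap inl ≠ ⊥) :
    (pi Set.univ fun _ : Ω => N).map inl ≤ K := by
  have hproj : ∀ ω, (K.comap inl).map (Pi.evalMonoidHom (fun _ : Ω => B) ω) = N :=
    map_eval_comap_inl_eq hN hKN (J := ⊤) le_normalizer_of_normal
      (map_top_of_surjective _ rightHom_surjective)
      (fun ω => by rw [comap_top]; exact map_top_of_surjective _ (Function.surjective_eval ω)) hK_ne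
  have := pi_commutator_map_eval_le (K.comap inl)
  simp only [hproj, hN.commutator_top_eq hZ] at this
  exact map_le_iff_le_comap.mpr this

end permAut

theorem clean_maximal_full_proj_with_minimal
    [Fintype Ω] [MulAction.IsPretransitive X Ω]
    [Fintype B]
    (hz : Subgroup.center B = ⊥)
    (M : Subgroup ((Ω → B) ⋊[permAut X Ω B] X))
    (hM : IsCoatom M)
    (hclean : ∀ N' : Subgroup B, N'.Normal →
      Subgroup.map (inl : (Ω → B) →* _) (Subgroup.pi Set.univ fun _ : Ω => N') ≤ M →
      N' = ⊥)
    (hsurj : M.map (rightHom : _ →* X) = ⊤)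
    (hproj : ∀ ω : Ω, Subgroup.map (Pi.evalMonoidHom (fun _ : Ω => B) ω)
      (Subgroup.comap (inl : (Ω → B) →* _) M) = ⊤)
    (N : Subgroup B) (hN : N.Normal) (hNbot : N ≠ ⊥)
    (hNmin : ∀ N' : Subgroup B, N'.Normal → N' ≤ N → N' = ⊥ ∨ N' = N)
    (hMN : Subgroup.comap (inl : (Ω → B) →* _) M ⊓
      (Subgroup.pi Set.univ fun _ : Ω => N) ≠ ⊥) :
    (∃ (T : Type) (_ : Group T), IsSimpleGroup T ∧ (∃ a b : T, a * b ≠ b * a) ∧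
      ∃ r : ℕ, 0 < r ∧ Nonempty (↥N ≃* (Fin r → T))) ∧
    (∀ ω : Ω, Subgroup.map (Pi.evalMonoidHom (fun _ : Ω => B) ω)
      (Subgroup.comap (inl : (Ω → B) →* _) M ⊓
        (Subgroup.pi Set.univ fun _ : Ω => N)) = N) ∧
    M = Subgroup.normalizer ((M ⊓ Subgroup.map (inl : (Ω → B) →* _)
      (Subgroup.pi Set.univ fun _ : Ω => N) : Subgroup _) : Set _) := by
  have hN' : N.IsMinimalNormal := .of_eq_bot_or_eq hN hNbot hNmin
  set A := (pi Set.univ fun _ : Ω => N).map (inl : (Ω → B) →* (Ω → B) ⋊[permAut X Ω B] X)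
  have hA : A.Normal := normal_map_inl_pi hN
  have hAM : ¬ A ≤ M := fun h => hNbot (hclean N hN h)
  have hMA : (M ⊓ A).comap inl = M.comap inl ⊓ pi Set.univ fun _ : Ω => N := by
    rw [comap_inf, comap_map_eq_self_of_injective inl_injective]
  have hM_le : M ≤ normalizer ((M ⊓ A : Subgroup _) : Set _) :=
    (le_inf le_normalizer le_normalizer_of_normal).trans inf_normalizer_le_normalizer_inf
  have hM_eq : M = normalizer ((M ⊓ A : Subgroup _) : Set _) := by
    refine ((hM.le_iff.mp hM_le).resolve_left fun htop => hAM ?_).symm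
    have := normalizer_eq_top_iff.mp htop
    exact (map_inl_pi_le_of_normal hz hN' inf_le_right (hMA ▸ hMN)).trans inf_le_left
  have hNA : ∃ a b : N, a * b ≠ b * a := by
    by_contra! hcomm
    exact hAM (hM_eq ▸ (map_inl_pi_le_centralizer hcomm).trans
      ((centralizer_le inf_le_right).trans (centralizer_le_normalizer _)))
  exact ⟨hN'.exists_nonabelian_simple_pow hNA,
    hMA ▸ map_eval_comap_inl_eq hN' inf_le_right hM_le hsurj hproj (hMA ▸ hMN), hM_eq⟩
end
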